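/- Fix λ > 0, an integer k ≥ 1, α ∈ (−1/k, −1/(k+1)), and times 0 ≤ t₁ ≤ t₂, and set p = p(n) = n^α (real power). Then, under the two-time dynamic Erdős–Rényi measure μ_{n,p}^{(t₁,t₂)}, lim_{n→∞} Cov[ f_{n,k}(ω₁), f_{n,k}(ω₂) ] / Var_{μ_{n,p}}[f_{n,k}] = e^{−λ(t₂−t₁)}. -/

import Mathlib

open Finset MeasureTheory Filter Real

noncomputable section

open scoped Classical

/-- The edge set `E_n`: unordered pairs of distinct elements of `[n]`. -/
abbrev Edge (n : ℕ) := {e : Sym2 (Fin n) // ¬ e.IsDiag}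

/-- An edge configuration on `[n]`. -/
abbrev Config (n : ℕ) := Edge n → Bool

/-- Bernoulli(p) weight of a state. -/
def bern (p : ℝ) (b : Bool) : ℝ := if b then p else 1 - p

/-- Weight of a configuration under the static Erdős–Rényi measure `μ_{n,p}`. -/
def staticWeight (n : ℕ) (p : ℝ) (ω : Config n) : ℝ := ∏ e : Edge n, bern p (ω e)

/-- Expectation under the static Erdős–Rényi measure `μ_{n,p}`. -/
def staticExp (n : ℕ) (p : ℝ) (f : Config n → ℝ) : ℝ :=
  ∑ ω : Config n, staticWeight n p ω * f ω

/-- Variance under the static Erdős–Rényi measure `μ_{n,p}`. -/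
def staticVar (n : ℕ) (p : ℝ) (f : Config n → ℝ) : ℝ :=
  staticExp n p (fun ω => (f ω - staticExp n p f) ^ 2)

/-- `A` is a clique of the graph `G(ω)`: every pair of distinct elements of `A`
is an edge of `G(ω)`. -/
def IsCliqueOf {n : ℕ} (A : Finset (Fin n)) (ω : Config n) : Prop :=
  ∀ e : Edge n, e.1 ∈ A.sym2 → ω e = true

/-- The clique count `f_{n,j}(ω)`: the number of `(j+1)`-element subsets of `[n]`
all of whose pairs are edges of `G(ω)`. -/
def cliqueCount (n j : ℕ) (ω : Config n) : ℕ :=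
  ((Finset.powersetCard (j + 1) (Finset.univ : Finset (Fin n))).filter
    (fun A => IsCliqueOf A ω)).card

/-- Real-valued clique count. -/
def cliqueCountR (n j : ℕ) (ω : Config n) : ℝ := (cliqueCount n j ω : ℝ)

/-- The Euler characteristic `χ_n(ω) = Σ_{j=0}^{n-1} (-1)^j f_{n,j}(ω)`. -/
def eulerChar (n : ℕ) (ω : Config n) : ℝ :=
  ∑ j ∈ Finset.range n, (-1 : ℝ) ^ j * cliqueCountR n j ω

/-- Transition probability of the stationary on/off Markov chain with invariant
law Bernoulli(p) over a time increment `s`. -/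
def transP (lam p s : ℝ) (b b' : Bool) : ℝ :=
  if b then (if b' then p + (1 - p) * Real.exp (-lam * s)
             else (1 - p) * (1 - Real.exp (-lam * s)))
  else (if b' then p * (1 - Real.exp (-lam * s))
        else (1 - p) + p * Real.exp (-lam * s))

/-- Weight of a trajectory of the stationary on/off Markov chain observed at the
times `t 0 ≤ t 1 ≤ …`. -/
def pathWeight (lam p : ℝ) {m : ℕ} (t : Fin m → ℝ) (b : Fin m → Bool) : ℝ :=
  ∏ i : Fin m,
    if (i : ℕ) = 0 then bern p (b i)
    else transP lam p (t i - t ⟨(i : ℕ) - 1, lt_of_le_of_lt (Nat.sub_le _ _) i.isLt⟩)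
      (b ⟨(i : ℕ) - 1, lt_of_le_of_lt (Nat.sub_le _ _) i.isLt⟩) (b i)

/-- Weight of an `m`-tuple of edge configurations under the `m`-time dynamic
Erdős–Rényi measure `μ_{n,p}^{(t 0, …, t (m-1))}`. -/
def dynWeight (lam p : ℝ) (n : ℕ) {m : ℕ} (t : Fin m → ℝ) (ω : Fin m → Config n) : ℝ :=
  ∏ e : Edge n, pathWeight lam p t (fun i => ω i e)

/-- Expectation under the `m`-time dynamic Erdős–Rényi measure. -/
def dynExp (lam p : ℝ) (n : ℕ) {m : ℕ} (t : Fin m → ℝ) (F : (Fin m → Config n) → ℝ) : ℝ :=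
  ∑ ω : Fin m → Config n, dynWeight lam p n t ω * F ω

/-- The normalized clique count `f̄_{n,k}` (under the measure `μ_{n,p}`). -/
def fbar (n k : ℕ) (p : ℝ) (ω : Config n) : ℝ :=
  (cliqueCountR n k ω - staticExp n p (cliqueCountR n k)) /
    Real.sqrt (staticVar n p (cliqueCountR n k))

/-- The normalized Euler characteristic `χ̄_n` (under the measure `μ_{n,p}`). -/
def chibar (n : ℕ) (p : ℝ) (ω : Config n) : ℝ :=
  (eulerChar n ω - staticExp n p (eulerChar n)) /
    Real.sqrt (staticVar n p (eulerChar n))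

/-- The clique indicator `1_A(ω)` as a real number. -/
def cliqueInd {n : ℕ} (A : Finset (Fin n)) (ω : Config n) : ℝ :=
  if IsCliqueOf A ω then 1 else 0

/-- A quadruple of subsets has an independent set if one of them shares at most
one vertex with each of the others. -/
def HasIndepSet {n : ℕ} (A : Fin 4 → Finset (Fin n)) : Prop :=
  ∃ q : Fin 4, ∀ r : Fin 4, r ≠ q → ((A q) ∩ (A r)).card ≤ 1

/-- The quantity `g(h; Ā)` built from clique indicators at three times. -/
def gQuad {n : ℕ} (A : Fin 4 → Finset (Fin n)) (ω : Fin 3 → Config n) : ℝ :=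
  (cliqueInd (A 0) (ω 2) - cliqueInd (A 0) (ω 1)) *
  (cliqueInd (A 1) (ω 2) - cliqueInd (A 1) (ω 1)) *
  (cliqueInd (A 2) (ω 1) - cliqueInd (A 2) (ω 0)) *
  (cliqueInd (A 3) (ω 1) - cliqueInd (A 3) (ω 0))

/-- `ver(Ā)`: inclusion–exclusion count of vertices. -/
def verA {n : ℕ} (A : Fin 4 → Finset (Fin n)) : ℤ :=
  (∑ q : Fin 4, ((A q).card : ℤ))
  - (∑ q : Fin 4, ∑ r : Fin 4, if q < r then (((A q) ∩ (A r)).card : ℤ) else 0)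
  + (∑ q : Fin 4, ∑ r : Fin 4, ∑ s : Fin 4,
      if q < r ∧ r < s then (((A q) ∩ (A r) ∩ (A s)).card : ℤ) else 0)
  - ((A 0 ∩ A 1 ∩ A 2 ∩ A 3).card : ℤ)

/-- `pair(Ā)`: inclusion–exclusion count of potential edges. -/
def pairA {n : ℕ} (A : Fin 4 → Finset (Fin n)) : ℤ :=
  (∑ q : Fin 4, (Nat.choose (A q).card 2 : ℤ))
  - (∑ q : Fin 4, ∑ r : Fin 4, if q < r then (Nat.choose ((A q) ∩ (A r)).card 2 : ℤ) else 0)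
  + (∑ q : Fin 4, ∑ r : Fin 4, ∑ s : Fin 4,
      if q < r ∧ r < s then (Nat.choose ((A q) ∩ (A r) ∩ (A s)).card 2 : ℤ) else 0)
  - (Nat.choose (A 0 ∩ A 1 ∩ A 2 ∩ A 3).card 2 : ℤ)

/-!
Both moments are sums over ordered pairs `(A, B)` of `(k+1)`-sets of vertices. A pair sharing
`j` vertices shares `m = C(j,2)` potential edges, and the product structure of the measures gives
its contribution `p ^ (2 C(k+1,2)) * ((1 + θ (p⁻¹ - 1)) ^ m - 1)` to the covariance, where
`θ = exp (-λ (t₂ - t₁))`; the variance is the case `θ = 1`. For `m ≤ 1` the covariance term is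
exactly `θ` times the variance term, so `Cov - θ Var` only sees pairs with `j ≥ 3`, and these are
negligible against the pairs with `j = 2` in the variance: the ratio of the two is
`O(n ^ (2 - j) * p ^ (1 - C(j,2)))`, which tends to `0` for `3 ≤ j ≤ k + 1` because `α > -1/k`.
-/

open Asymptotics Topology

namespace Finset

variable {α : Type*} [Fintype α] [DecidableEq α]

theorem card_filter_card_inter_eq (A : Finset α) {r j : ℕ} (hj : j ≤ r) :
    #{B ∈ powersetCard r univ | #(A ∩ B) = j} =
      (#A).choose j * (Fintype.card α - #A).choose (r - j) := by
  rw [← card_compl, ← card_powersetCard, ← card_powersetCard, ← card_product]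
  refine card_nbij' (fun B => (A ∩ B, B \ A)) (fun X => X.1 ∪ X.2) ?_ ?_ ?_ ?_
  · intro B hB
    simp only [mem_coe, mem_filter, mem_powersetCard, subset_univ, true_and] at hB
    have hsplit := card_inter_add_card_sdiff B A
    rw [inter_comm] at hsplit
    simp only [mem_coe, mem_product, mem_powersetCard, subset_compl_iff_disjoint_left]
    exact ⟨⟨inter_subset_left, hB.2⟩, disjoint_sdiff, by omega⟩
  · rintro ⟨X, Y⟩ hXY
    simp only [mem_coe, mem_product, mem_powersetCard, subset_compl_iff_disjoint_left] at hXY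
    obtain ⟨⟨hXA, hX⟩, hYA, hY⟩ := hXY
    have hAX : A ∩ (X ∪ Y) = X := by
      rw [inter_union_distrib_left, inter_eq_right.mpr hXA,
        disjoint_iff_inter_eq_empty.mp hYA, union_empty]
    simp only [mem_coe, mem_filter, mem_powersetCard, subset_univ, true_and]
    rw [card_union_of_disjoint (disjoint_of_subset_left hXA hYA), hAX]
    omega
  · intro B _
    dsimp only
    rw [inter_comm, union_comm, sdiff_union_inter]
  · rintro ⟨X, Y⟩ hXY
    simp only [mem_coe, mem_product, mem_powersetCard, subset_compl_iff_disjoint_left] at hXY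
    obtain ⟨⟨hXA, -⟩, hYA, -⟩ := hXY
    simp only [inter_union_distrib_left, inter_eq_right.mpr hXA,
      disjoint_iff_inter_eq_empty.mp hYA, union_empty, union_sdiff_distrib,
      sdiff_eq_empty_iff_subset.mpr hXA, empty_union, sdiff_eq_self_of_disjoint hYA.symm]

variable {M : Type*} [AddCommMonoid M]

theorem sum_powersetCard_card_inter (A : Finset α) {r : ℕ} (hA : #A = r) (g : ℕ → M) :
    ∑ B ∈ powersetCard r univ, g #(A ∩ B) =
      ∑ j ∈ range (r + 1), (r.choose j * (Fintype.card α - r).choose (r - j)) • g j := by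
  rw [← sum_fiberwise_of_maps_to (g := fun B => #(A ∩ B)) (t := range (r + 1))]
  · refine sum_congr rfl fun j hj => ?_
    rw [sum_congr rfl fun B hB => congrArg g (mem_filter.mp hB).2, sum_const,
      card_filter_card_inter_eq A (Nat.lt_succ_iff.mp (mem_range.mp hj)), hA]
  · intro B hB
    rw [mem_range, Nat.lt_succ_iff, ← (mem_powersetCard.mp hB).2]
    exact card_le_card inter_subset_right

theorem sum_powersetCard_sum_powersetCard_card_inter (r : ℕ) (g : ℕ → M) :
    ∑ A ∈ powersetCard r univ, ∑ B ∈ powersetCard r (univ : Finset α), g #(A ∩ B) =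
      (Fintype.card α).choose r •
        ∑ j ∈ range (r + 1), (r.choose j * (Fintype.card α - r).choose (r - j)) • g j := by
  rw [sum_congr rfl fun A hA => sum_powersetCard_card_inter A (mem_powersetCard.mp hA).2 g,
    sum_const, card_powersetCard, card_univ]

end Finset

section RealInequalities

theorem abs_sum_div_sum_sub_le {ι : Type*} {s t : Finset ι} (hts : t ⊆ s) {i₀ : ι}
    (hi₀ : i₀ ∈ s) {u v : ι → ℝ} {θ : ℝ} (hv : ∀ i ∈ s, 0 ≤ v i) (hv₀ : 0 < v i₀)
    (hu : ∀ i ∈ s \ t, u i = θ * v i) (huv : ∀ i ∈ t, |u i - θ * v i| ≤ v i) :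
    |(∑ i ∈ s, u i) / (∑ i ∈ s, v i) - θ| ≤ (∑ i ∈ t, v i) / v i₀ := by
  have hV : v i₀ ≤ ∑ i ∈ s, v i := single_le_sum hv hi₀
  have hnum : ∑ i ∈ s, u i - θ * ∑ i ∈ s, v i = ∑ i ∈ t, (u i - θ * v i) := by
    rw [mul_sum, ← sum_sub_distrib, ← sum_sdiff hts,
      sum_eq_zero fun i hi => sub_eq_zero.mpr (hu i hi), zero_add]
  calc |(∑ i ∈ s, u i) / (∑ i ∈ s, v i) - θ|
      = |∑ i ∈ t, (u i - θ * v i)| / ∑ i ∈ s, v i := by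
        rw [div_sub' (by linarith), abs_div, abs_of_pos (by linarith : 0 < ∑ i ∈ s, v i),
          mul_comm _ θ, hnum]
    _ ≤ (∑ i ∈ t, v i) / ∑ i ∈ s, v i :=
        div_le_div_of_nonneg_right ((abs_sum_le_sum_abs _ _).trans (sum_le_sum huv))
          (by linarith)
    _ ≤ (∑ i ∈ t, v i) / v i₀ :=
        div_le_div_of_nonneg_left (sum_nonneg fun i hi => hv i (hts hi)) hv₀ hV

theorem one_add_mul_sub_one_pow_sub_one_of_le_one (θ x : ℝ) {m : ℕ} (hm : m ≤ 1) :
    (1 + θ * (x - 1)) ^ m - 1 = θ * (x ^ m - 1) := by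
  interval_cases m <;> ring

theorem abs_one_add_mul_sub_one_pow_sub_le {θ x : ℝ} (hθ₀ : 0 ≤ θ) (hθ₁ : θ ≤ 1) (hx : 1 ≤ x)
    (m : ℕ) : |((1 + θ * (x - 1)) ^ m - 1) - θ * (x ^ m - 1)| ≤ x ^ m - 1 := by
  have h₁ : 1 ≤ (1 + θ * (x - 1)) ^ m := one_le_pow₀ (by nlinarith)
  have h₂ : (1 + θ * (x - 1)) ^ m ≤ x ^ m := pow_le_pow_left₀ (by nlinarith) (by nlinarith) m
  have h₃ : 0 ≤ θ * (x ^ m - 1) := mul_nonneg hθ₀ (by linarith)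
  have h₄ : θ * (x ^ m - 1) ≤ x ^ m - 1 := mul_le_of_le_one_left (by linarith) hθ₁
  rw [abs_sub_le_iff]
  constructor <;> linarith

theorem pow_sub_one_div_sub_one_le {x : ℝ} (hx : 1 ≤ x) (m : ℕ) :
    (x ^ m - 1) / (x - 1) ≤ m * x ^ (m - 1) := by
  rcases hx.eq_or_lt with rfl | hx
  · simp
  have h := abs_pow_sub_pow_le x 1 m
  rw [one_pow, abs_of_nonneg (by linarith [one_le_pow₀ hx.le (n := m)]),
    abs_of_pos (by linarith), abs_one, max_eq_left (by rwa [abs_of_pos (by linarith)]),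
    abs_of_pos (by linarith)] at h
  rw [div_le_iff₀ (by linarith)]
  linarith

end RealInequalities

theorem isTheta_natCast_sub (c : ℕ) :
    (fun n : ℕ => ((n - c : ℕ) : ℝ)) =Θ[atTop] fun n => (n : ℝ) := by
  refine ⟨IsBigO.of_bound 1 (Eventually.of_forall fun n => ?_),
    IsBigO.of_bound 2 ((eventually_ge_atTop (2 * c)).mono fun n hn => ?_)⟩
  · simp only [Real.norm_natCast, one_mul, Nat.cast_le]
    exact Nat.sub_le n c
  · simp only [Real.norm_natCast]
    exact_mod_cast (by omega : n ≤ 2 * (n - c))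

theorem isTheta_choose_sub (c r : ℕ) :
    (fun n : ℕ => ((n - c).choose r : ℝ)) =Θ[atTop] fun n => (n : ℝ) ^ r :=
  IsTheta.trans ⟨(isTheta_choose r).1.comp_tendsto (tendsto_sub_atTop_nat c),
    (isTheta_choose r).2.comp_tendsto (tendsto_sub_atTop_nat c)⟩ ((isTheta_natCast_sub c).pow r)

section CliqueEdges

variable {n : ℕ}

def cliqueEdges (A : Finset (Fin n)) : Finset (Edge n) :=
  A.sym2.subtype fun z => ¬ z.IsDiag

theorem mem_cliqueEdges {A : Finset (Fin n)} {e : Edge n} : e ∈ cliqueEdges A ↔ e.1 ∈ A.sym2 :=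
  Finset.mem_subtype

theorem card_cliqueEdges (A : Finset (Fin n)) : #(cliqueEdges A) = (#A).choose 2 := by
  rw [cliqueEdges, card_subtype, sym2_eq_image, Sym2.filter_image_mk_not_isDiag,
    Sym2.card_image_offDiag]

theorem cliqueEdges_inter (A B : Finset (Fin n)) :
    cliqueEdges (A ∩ B) = cliqueEdges A ∩ cliqueEdges B := by
  ext e
  simp only [mem_inter, mem_cliqueEdges, mem_sym2_iff]
  exact ⟨fun h => ⟨fun a ha => (h a ha).1, fun a ha => (h a ha).2⟩,
    fun h a ha => ⟨h.1 a ha, h.2 a ha⟩⟩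

theorem cliqueInd_eq_prod (A : Finset (Fin n)) (ω : Config n) :
    cliqueInd A ω = ∏ e ∈ cliqueEdges A, if ω e then 1 else 0 := by
  simp only [cliqueInd, IsCliqueOf, prod_boole, mem_cliqueEdges]
  congr

theorem cliqueInd_empty (ω : Config n) : cliqueInd ∅ ω = 1 := by
  rw [cliqueInd, if_pos]
  intro e he
  simp at he

theorem cliqueCountR_eq_sum (k : ℕ) (ω : Config n) :
    cliqueCountR n k ω = ∑ A ∈ powersetCard (k + 1) univ, cliqueInd A ω := by
  rw [cliqueCountR, cliqueCount, card_filter, Nat.cast_sum]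
  exact sum_congr rfl fun A _ => by split_ifs <;> simp [cliqueInd, *]

end CliqueEdges

section ProductMeasure

variable {n : ℕ} (lam p : ℝ)

theorem sum_staticWeight : ∑ ω : Config n, staticWeight n p ω = 1 := by
  simp only [staticWeight]
  rw [← Fintype.prod_sum (fun (_ : Edge n) b => bern p b)]
  simp [bern]

theorem staticVar_eq_sub (f : Config n → ℝ) :
    staticVar n p f = staticExp n p (fun ω => f ω * f ω) - staticExp n p f * staticExp n p f := by
  have hsq : ∀ ω c, staticWeight n p ω * (f ω - c) ^ 2 =
      staticWeight n p ω * (f ω * f ω) - 2 * c * (staticWeight n p ω * f ω) +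
        c ^ 2 * staticWeight n p ω := fun ω c => by ring
  rw [staticVar, staticExp]
  simp only [hsq, sum_add_distrib, sum_sub_distrib, ← mul_sum, sum_staticWeight]
  rw [← staticExp, ← staticExp]
  ring

theorem pathWeight_two (s t : ℝ) (b : Fin 2 → Bool) :
    pathWeight lam p ![s, t] b = bern p (b 0) * transP lam p (t - s) (b 0) (b 1) := by
  simp [pathWeight, Fin.prod_univ_two]

theorem sum_pathWeight_two (s t : ℝ) (F : Bool → Bool → ℝ) :
    ∑ b : Fin 2 → Bool, pathWeight lam p ![s, t] b * F (b 0) (b 1) =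
      ∑ x, ∑ y, bern p x * transP lam p (t - s) x y * F x y := by
  rw [← (finTwoArrowEquiv Bool).symm.sum_comp, Fintype.sum_prod_type]
  simp [pathWeight_two]

theorem transP_zero (b b' : Bool) : transP lam p 0 b b' = if b = b' then 1 else 0 := by
  cases b <;> cases b' <;> simp [transP]

theorem dynWeight_same_time (s : ℝ) (ω : Fin 2 → Config n) :
    dynWeight lam p n ![s, s] ω = if ω 0 = ω 1 then staticWeight n p (ω 0) else 0 := by
  simp only [dynWeight, pathWeight_two, sub_self, transP_zero, mul_ite, mul_one, mul_zero]
  split_ifs with h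
  · simp [h, staticWeight]
  · obtain ⟨e, he⟩ := Function.ne_iff.mp h
    exact prod_eq_zero (mem_univ e) (if_neg he)

theorem dynExp_same_time (s : ℝ) (G : (Fin 2 → Config n) → ℝ) :
    dynExp lam p n ![s, s] G = staticExp n p fun ω => G ![ω, ω] := by
  rw [dynExp, ← (finTwoArrowEquiv (Config n)).symm.sum_comp, Fintype.sum_prod_type]
  simp [dynWeight_same_time, staticExp]

def twoTimeCov (s t : ℝ) (f : Config n → ℝ) : ℝ :=
  dynExp lam p n ![s, t] (fun ω => f (ω 0) * f (ω 1)) -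
    dynExp lam p n ![s, t] (fun ω => f (ω 0)) * dynExp lam p n ![s, t] (fun ω => f (ω 1))

theorem staticVar_eq_twoTimeCov (s : ℝ) (f : Config n → ℝ) :
    staticVar n p f = twoTimeCov lam p s s f := by
  simp [twoTimeCov, dynExp_same_time, staticVar_eq_sub]

theorem dynExp_sum {m : ℕ} (t : Fin m → ℝ) {ι : Type*} (s : Finset ι)
    (G : ι → (Fin m → Config n) → ℝ) :
    dynExp lam p n t (fun ω => ∑ i ∈ s, G i ω) = ∑ i ∈ s, dynExp lam p n t (G i) := by
  simp only [dynExp, mul_sum]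
  exact sum_comm

theorem dynExp_prod {m : ℕ} (t : Fin m → ℝ) (h : Edge n → (Fin m → Bool) → ℝ) :
    dynExp lam p n t (fun ω => ∏ e, h e fun i => ω i e) =
      ∏ e, ∑ b, pathWeight lam p t b * h e b := by
  rw [Fintype.prod_sum, dynExp]
  exact Fintype.sum_equiv (Equiv.piComm _) _ _ fun ω => by
    simp [dynWeight, prod_mul_distrib, Equiv.piComm]

theorem sum_pathWeight_two_mul_ite (hp : p ≠ 0) (s t : ℝ) (a c : Prop) [Decidable a]
    [Decidable c] :
    ∑ b : Fin 2 → Bool, pathWeight lam p ![s, t] b *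
        ((if a then (if b 0 then 1 else 0) else 1) * (if c then (if b 1 then 1 else 0) else 1)) =
      (if a then p else 1) * (if c then p else 1) *
        (if a ∧ c then 1 + exp (-lam * (t - s)) * (p⁻¹ - 1) else 1) := by
  rw [sum_pathWeight_two lam p s t fun x y =>
    (if a then (if x then 1 else 0) else 1) * (if c then (if y then 1 else 0) else 1)]
  by_cases ha : a <;> by_cases hc : c <;> simp [ha, hc, bern, transP] <;> field_simp <;> ring

theorem dynExp_cliqueInd_mul_cliqueInd (hp : p ≠ 0) (s t : ℝ) (A B : Finset (Fin n)) :
    dynExp lam p n ![s, t] (fun ω => cliqueInd A (ω 0) * cliqueInd B (ω 1)) =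
      p ^ #(cliqueEdges A) * p ^ #(cliqueEdges B) *
        (1 + exp (-lam * (t - s)) * (p⁻¹ - 1)) ^ #(cliqueEdges A ∩ cliqueEdges B) := by
  set h : Edge n → (Fin 2 → Bool) → ℝ := fun e b =>
    (if e ∈ cliqueEdges A then (if b 0 then 1 else 0) else 1) *
      (if e ∈ cliqueEdges B then (if b 1 then 1 else 0) else 1)
  have hprod : ∀ ω : Fin 2 → Config n,
      cliqueInd A (ω 0) * cliqueInd B (ω 1) = ∏ e, h e fun i => ω i e := fun ω => by
    rw [prod_mul_distrib, prod_ite_mem, prod_ite_mem, univ_inter, univ_inter,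
      cliqueInd_eq_prod, cliqueInd_eq_prod]
  rw [funext hprod, dynExp_prod]
  simp only [h, sum_pathWeight_two_mul_ite lam p hp, ← mem_inter, prod_mul_distrib,
    prod_ite_mem, univ_inter, prod_const]

end ProductMeasure

section CliqueCovariance

variable {n : ℕ} (lam p : ℝ)

theorem dynExp_cliqueInd_fst (hp : p ≠ 0) (s t : ℝ) (A : Finset (Fin n)) :
    dynExp lam p n ![s, t] (fun ω => cliqueInd A (ω 0)) = p ^ #(cliqueEdges A) := by
  simpa [cliqueInd_empty, ← cliqueEdges_inter, card_cliqueEdges] using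
    dynExp_cliqueInd_mul_cliqueInd lam p hp s t A ∅

theorem dynExp_cliqueInd_snd (hp : p ≠ 0) (s t : ℝ) (B : Finset (Fin n)) :
    dynExp lam p n ![s, t] (fun ω => cliqueInd B (ω 1)) = p ^ #(cliqueEdges B) := by
  simpa [cliqueInd_empty, ← cliqueEdges_inter, card_cliqueEdges] using
    dynExp_cliqueInd_mul_cliqueInd lam p hp s t ∅ B

/-- The number of `r`-subsets of `Fin n` meeting a fixed `r`-subset in exactly `j` points
(`Finset.card_filter_card_inter_eq`). -/
def overlapCount (n r j : ℕ) : ℕ := r.choose j * (n - r).choose (r - j)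

theorem twoTimeCov_cliqueCountR (hp : p ≠ 0) (s t : ℝ) (k : ℕ) :
    twoTimeCov lam p s t (cliqueCountR n k) =
      n.choose (k + 1) * (p ^ (k + 1).choose 2) ^ 2 *
        ∑ j ∈ range (k + 2), overlapCount n (k + 1) j *
          ((1 + exp (-lam * (t - s)) * (p⁻¹ - 1)) ^ j.choose 2 - 1) := by
  have hcov : twoTimeCov lam p s t (cliqueCountR n k) =
      ∑ A ∈ powersetCard (k + 1) univ, ∑ B ∈ powersetCard (k + 1) (univ : Finset (Fin n)),
      (p ^ (k + 1).choose 2) ^ 2 *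
        ((1 + exp (-lam * (t - s)) * (p⁻¹ - 1)) ^ (#(A ∩ B)).choose 2 - 1) := by
    simp only [twoTimeCov, cliqueCountR_eq_sum, sum_mul_sum, dynExp_sum,
      dynExp_cliqueInd_mul_cliqueInd lam p hp, dynExp_cliqueInd_fst lam p hp,
      dynExp_cliqueInd_snd lam p hp, ← sum_sub_distrib]
    refine sum_congr rfl fun A hA => sum_congr rfl fun B hB => ?_
    rw [← cliqueEdges_inter, card_cliqueEdges, card_cliqueEdges, card_cliqueEdges,
      (mem_powersetCard.mp hA).2, (mem_powersetCard.mp hB).2]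
    ring
  rw [hcov, sum_powersetCard_sum_powersetCard_card_inter (k + 1) fun j =>
    (p ^ (k + 1).choose 2) ^ 2 * ((1 + exp (-lam * (t - s)) * (p⁻¹ - 1)) ^ j.choose 2 - 1)]
  simp only [Fintype.card_fin, nsmul_eq_mul, overlapCount, mul_sum]
  push_cast
  exact sum_congr rfl fun j _ => by ring

theorem staticVar_cliqueCountR (hp : p ≠ 0) (k : ℕ) :
    staticVar n p (cliqueCountR n k) =
      n.choose (k + 1) * (p ^ (k + 1).choose 2) ^ 2 *
        ∑ j ∈ range (k + 2), overlapCount n (k + 1) j * (p⁻¹ ^ j.choose 2 - 1) := by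
  rw [staticVar_eq_twoTimeCov 0 p 0, twoTimeCov_cliqueCountR 0 p hp]
  simp

end CliqueCovariance

section OverlapAsymptotics

theorem overlapCount_div_isBigO {r j : ℕ} (hj : j ≤ r) (hr : 2 ≤ r) :
    (fun n => (overlapCount n r j : ℝ) / overlapCount n r 2) =O[atTop]
      fun n : ℕ => (n : ℝ) ^ ((2 : ℝ) - j) := by
  have hratio := ((isTheta_choose_sub r (r - j)).div (isTheta_choose_sub r (r - 2))).1
  refine (hratio.const_mul_left ((r.choose j : ℝ) / r.choose 2)).congr' ?_ ?_
  · exact Eventually.of_forall fun n => by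
      simp only [overlapCount, Nat.cast_mul]
      ring
  · filter_upwards [eventually_gt_atTop 0] with n hn
    have hn' : (0 : ℝ) < n := Nat.cast_pos.mpr hn
    rw [← Real.rpow_natCast, ← Real.rpow_natCast, ← Real.rpow_sub hn', Nat.cast_sub hj,
      Nat.cast_sub hr]
    ring_nf

theorem overlap_exponent_neg {k j : ℕ} {α : ℝ} (hj : 3 ≤ j) (hjk : j ≤ k + 1)
    (hα : -(1 / (k : ℝ)) < α) : (2 : ℝ) - j + -α * ((j.choose 2 - 1 : ℕ) : ℝ) < 0 := by
  have hk : (2 : ℝ) ≤ k := by exact_mod_cast (by omega : 2 ≤ k)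
  have hj' : (3 : ℝ) ≤ j := by exact_mod_cast hj
  have hjk' : (j : ℝ) ≤ k + 1 := by exact_mod_cast hjk
  have hm : ((j.choose 2 - 1 : ℕ) : ℝ) = (j - 2) * (j + 1) / 2 := by
    rw [Nat.cast_sub (Nat.one_le_iff_ne_zero.mpr (Nat.choose_pos (by omega)).ne'),
      Nat.cast_choose_two]
    ring
  have hαk : -α * k < 1 := by
    have := mul_lt_mul_of_pos_right hα (by linarith : (0 : ℝ) < k)
    field_simp at this
    linarith
  have hhalf : -α * ((j + 1) / 2) < 1 := by
    rcases le_or_gt 0 (-α) with h | h <;> nlinarith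
  rw [hm]
  nlinarith [mul_lt_mul_of_pos_right hhalf (by linarith : (0 : ℝ) < j - 2)]

theorem tendsto_overlapCount_ratio {k j : ℕ} {α : ℝ} (hj : 3 ≤ j) (hjk : j ≤ k + 1)
    (hα : -(1 / (k : ℝ)) < α) (hα₀ : α < 0) :
    Tendsto (fun n : ℕ => (overlapCount n (k + 1) j : ℝ) * (((n : ℝ) ^ α)⁻¹ ^ j.choose 2 - 1) /
      (overlapCount n (k + 1) 2 * (((n : ℝ) ^ α)⁻¹ - 1))) atTop (𝓝 0) := by
  set m := j.choose 2
  have hmajor : Tendsto (fun n : ℕ => m * ((overlapCount n (k + 1) j : ℝ) /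
      overlapCount n (k + 1) 2 * ((n : ℝ) ^ (-α * ((m - 1 : ℕ) : ℝ))))) atTop (𝓝 0) := by
    have hO := ((overlapCount_div_isBigO (r := k + 1) (by omega) (by omega)).mul
      (isBigO_refl (fun n : ℕ => (n : ℝ) ^ (-α * ((m - 1 : ℕ) : ℝ))) atTop)).const_mul_left
      (m : ℝ)
    refine hO.trans_tendsto (((tendsto_rpow_neg_atTop (neg_pos.mpr
      (overlap_exponent_neg hj hjk hα))).comp tendsto_natCast_atTop_atTop).congr' ?_)
    filter_upwards [eventually_gt_atTop 0] with n hn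
    rw [Function.comp_apply, neg_neg, Real.rpow_add (Nat.cast_pos.mpr hn)]
  refine squeeze_zero' ((eventually_gt_atTop 0).mono fun n hn => ?_)
    ((eventually_gt_atTop 0).mono fun n hn => ?_) hmajor
  all_goals
    have hx : 1 ≤ ((n : ℝ) ^ α)⁻¹ := one_le_inv₀ (by positivity) |>.mpr
      (Real.rpow_le_one_of_one_le_of_nonpos (by exact_mod_cast hn) hα₀.le)
  · exact div_nonneg (mul_nonneg (Nat.cast_nonneg _) (sub_nonneg.mpr (one_le_pow₀ hx)))
      (mul_nonneg (Nat.cast_nonneg _) (sub_nonneg.mpr hx))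
  · have hpow : ((n : ℝ) ^ α)⁻¹ ^ (m - 1) = (n : ℝ) ^ (-α * ((m - 1 : ℕ) : ℝ)) := by
      rw [Real.rpow_mul (Nat.cast_nonneg n), Real.rpow_neg (Nat.cast_nonneg n),
        Real.rpow_natCast]
    rw [mul_div_mul_comm, ← hpow, mul_left_comm]
    exact mul_le_mul_of_nonneg_left (pow_sub_one_div_sub_one_le hx m)
      (div_nonneg (Nat.cast_nonneg _) (Nat.cast_nonneg _))

end OverlapAsymptotics

section CliqueRatio

variable {n : ℕ}

theorem overlapCount_two_pos {k : ℕ} (hk : 1 ≤ k) (hn : 2 * k ≤ n) : 0 < overlapCount n (k + 1) 2 :=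
  Nat.mul_pos (Nat.choose_pos (by omega)) (Nat.choose_pos (by omega))

theorem abs_twoTimeCov_div_staticVar_sub_le {lam p s t : ℝ} {k : ℕ} (hlam : 0 ≤ lam)
    (hst : s ≤ t) (hp₀ : 0 < p) (hp₁ : p < 1) (hk : 1 ≤ k) (hn : 2 * k ≤ n) :
    |twoTimeCov lam p s t (cliqueCountR n k) / staticVar n p (cliqueCountR n k) -
        exp (-lam * (t - s))| ≤
      ∑ j ∈ Ico 3 (k + 2), (overlapCount n (k + 1) j : ℝ) * (p⁻¹ ^ j.choose 2 - 1) /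
        (overlapCount n (k + 1) 2 * (p⁻¹ - 1)) := by
  have hx : 1 < p⁻¹ := one_lt_inv₀ hp₀ |>.mpr hp₁
  have hθ₀ : 0 ≤ exp (-lam * (t - s)) := (exp_pos _).le
  have hθ₁ : exp (-lam * (t - s)) ≤ 1 := exp_le_one_iff.mpr (by nlinarith)
  have hF₂ : (0 : ℝ) < overlapCount n (k + 1) 2 := Nat.cast_pos.mpr (overlapCount_two_pos hk hn)
  have hc : (n.choose (k + 1) : ℝ) * (p ^ (k + 1).choose 2) ^ 2 ≠ 0 :=
    mul_ne_zero (Nat.cast_ne_zero.mpr (Nat.choose_pos (by omega)).ne') (by positivity)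
  rw [twoTimeCov_cliqueCountR lam p hp₀.ne', staticVar_cliqueCountR p hp₀.ne',
    mul_div_mul_left _ _ hc, ← sum_div]
  convert abs_sum_div_sum_sub_le (t := Ico 3 (k + 2)) (i₀ := 2) ?_ ?_ ?_ ?_ ?_ ?_ using 2
  · simp
  · intro j
    simp only [mem_Ico, mem_range]
    omega
  · exact mem_range.mpr (by omega)
  · exact fun j _ => mul_nonneg (Nat.cast_nonneg _) (sub_nonneg.mpr (one_le_pow₀ hx.le))
  · simpa using mul_pos hF₂ (sub_pos.mpr hx)
  · intro j hj
    have hj3 : j.choose 2 ≤ 1 := by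
      simp only [Finset.mem_sdiff, mem_range, mem_Ico, not_and, not_lt] at hj
      have : j < 3 := by by_contra h; exact absurd (hj.2 (by omega)) (by omega)
      interval_cases j <;> simp
    rw [one_add_mul_sub_one_pow_sub_one_of_le_one _ _ hj3]
    ring
  · intro j _
    rw [mul_left_comm, ← mul_sub, abs_mul, Nat.abs_cast]
    exact mul_le_mul_of_nonneg_left (abs_one_add_mul_sub_one_pow_sub_le hθ₀ hθ₁ hx.le _)
      (Nat.cast_nonneg _)

end CliqueRatio

theorem dynamic_covariance_cliqueCount_tendsto_general (lam : ℝ) (hlam : 0 < lam)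
    (k : ℕ) (hk : 1 ≤ k) (α : ℝ)
    (hα : α ∈ Set.Ioo (-(1 / (k : ℝ))) (-(1 / ((k : ℝ) + 1))))
    (t₁ t₂ : ℝ) (ht : t₁ ≤ t₂) :
    Filter.Tendsto
      (fun n : ℕ =>
        (dynExp lam ((n : ℝ) ^ α) n ![t₁, t₂]
            (fun ω => cliqueCountR n k (ω 0) * cliqueCountR n k (ω 1)) -
          dynExp lam ((n : ℝ) ^ α) n ![t₁, t₂] (fun ω => cliqueCountR n k (ω 0)) *
            dynExp lam ((n : ℝ) ^ α) n ![t₁, t₂] (fun ω => cliqueCountR n k (ω 1))) /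
          staticVar n ((n : ℝ) ^ α) (cliqueCountR n k))
      Filter.atTop (nhds (Real.exp (-lam * (t₂ - t₁)))) := by
  obtain ⟨hα₁, hα₂⟩ := hα
  have hα₀ : α < 0 := hα₂.trans (neg_neg_of_pos (by positivity))
  have hp : Tendsto (fun n : ℕ => (n : ℝ) ^ α) atTop (𝓝 0) := by
    simpa [Function.comp_def] using
      (tendsto_rpow_neg_atTop (neg_pos.mpr hα₀)).comp tendsto_natCast_atTop_atTop
  have herr : Tendsto (fun n : ℕ => ∑ j ∈ Ico 3 (k + 2), (overlapCount n (k + 1) j : ℝ) *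
      (((n : ℝ) ^ α)⁻¹ ^ j.choose 2 - 1) / (overlapCount n (k + 1) 2 * (((n : ℝ) ^ α)⁻¹ - 1)))
      atTop (𝓝 0) := by
    simpa using tendsto_finsetSum (Ico 3 (k + 2)) fun j hj =>
      tendsto_overlapCount_ratio (mem_Ico.mp hj).1 (Nat.le_of_lt_succ (mem_Ico.mp hj).2) hα₁ hα₀
  refine tendsto_iff_norm_sub_tendsto_zero.mpr
    (squeeze_zero' (Eventually.of_forall fun n => norm_nonneg _) ?_ herr)
  filter_upwards [eventually_ge_atTop (2 * k), hp.eventually (gt_mem_nhds one_pos)]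
    with n hn hp₁
  exact abs_twoTimeCov_div_staticVar_sub_le hlam.le ht
    (Real.rpow_pos_of_pos (Nat.cast_pos.mpr (by omega)) α) hp₁ hk hn

/-- The normalized two-time covariance of the clique counts
converges to `exp(-λ(t₂ - t₁))`. -/
theorem dynamic_covariance_cliqueCount_tendsto (lam : ℝ) (hlam : 0 < lam)
    (k : ℕ) (hk : 1 ≤ k) (α : ℝ)
    (hα : α ∈ Set.Ioo (-(1 / (k : ℝ))) (-(1 / ((k : ℝ) + 1))))
    (t₁ t₂ : ℝ) (ht₁ : 0 ≤ t₁) (ht : t₁ ≤ t₂) :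
    Filter.Tendsto
      (fun n : ℕ =>
        (dynExp lam ((n : ℝ) ^ α) n ![t₁, t₂]
            (fun ω => cliqueCountR n k (ω 0) * cliqueCountR n k (ω 1)) -
          dynExp lam ((n : ℝ) ^ α) n ![t₁, t₂] (fun ω => cliqueCountR n k (ω 0)) *
            dynExp lam ((n : ℝ) ^ α) n ![t₁, t₂] (fun ω => cliqueCountR n k (ω 1))) /
          staticVar n ((n : ℝ) ^ α) (cliqueCountR n k))
      Filter.atTop (nhds (Real.exp (-lam * (t₂ - t₁)))) :=
  dynamic_covariance_cliqueCount_tendsto_general lam hlam k hk α hα t₁ t₂ ht
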